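/- arXiv:2605.06874 — 7 statements merged into one kernel-verified Lean document; each statement's English description precedes it below -/
import Mathlib

section
/- Let P be a row-stochastic matrix and D a diagonal matrix with strictly positive diagonal entries. If λ is a nonzero eigenvalue of L = D(I - P), then Re(λ) > 0. More precisely, for any eigenvalue λ with eigenvector x maximized in modulus at coordinate k, one has 2·d(k)·Re(λ) ≥ |λ|². -/
/-!
Look at the eigen-equation in a coordinate `k` where `|x k|` is maximal:
`(d k - λ) x k = d k ∑ⱼ P k j x j`, and the right-hand side is a convex combination of numbers
of modulus at most `|x k|`. Hence `|d k - λ| ≤ d k`, i.e. `λ` lies in the closed disc of radius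
`d k` centred at `d k`, which is the inequality `|λ|² ≤ 2 d k Re λ`.
-/

open Matrix

lemma norm_sum_smul_le_of_nonneg_of_sum_eq_one {ι E : Type*} [Fintype ι]
    [SeminormedAddCommGroup E] [NormedSpace ℝ E] {w : ι → ℝ} {v : ι → E} {M : ℝ}
    (hw0 : ∀ j, 0 ≤ w j) (hw1 : ∑ j, w j = 1) (hv : ∀ j, ‖v j‖ ≤ M) :
    ‖∑ j, w j • v j‖ ≤ M :=
  calc ‖∑ j, w j • v j‖ ≤ ∑ j, w j * M := by
        refine (norm_sum_le _ _).trans (Finset.sum_le_sum fun j _ => ?_)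
        rw [norm_smul, Real.norm_of_nonneg (hw0 j)]
        exact mul_le_mul_of_nonneg_left (hv j) (hw0 j)
    _ = M := by rw [← Finset.sum_mul, hw1, one_mul]

lemma Complex.sq_norm_le_two_mul_re_of_norm_ofReal_sub_le {r : ℝ} {z : ℂ}
    (h : ‖(r : ℂ) - z‖ ≤ |r|) : ‖z‖ ^ 2 ≤ 2 * r * z.re := by
  have hsq : ‖(r : ℂ) - z‖ ^ 2 ≤ r ^ 2 := by
    simpa only [sq_abs] using pow_le_pow_left₀ (norm_nonneg _) h 2
  rw [Complex.sq_norm, Complex.normSq_apply] at hsq ⊢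
  simp only [Complex.sub_re, Complex.sub_im, Complex.ofReal_re, Complex.ofReal_im] at hsq
  nlinarith

lemma Matrix.map_ofReal_diagonal_mul_one_sub_mulVec_apply {ι : Type*} [Fintype ι]
    [DecidableEq ι] (d : ι → ℝ) (P : Matrix ι ι ℝ) (x : ι → ℂ) (i : ι) :
    ((diagonal d * (1 - P)).map Complex.ofReal *ᵥ x) i
      = d i * (x i - ∑ j, P i j • x j) := by
  simp only [mulVec, dotProduct, map_apply, diagonal_mul, sub_apply, one_apply,
    Complex.ofReal_mul, Complex.ofReal_sub, mul_assoc, ← Finset.mul_sum, sub_mul,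
    Finset.sum_sub_distrib, Complex.real_smul]
  simp [apply_ite Complex.ofReal]

lemma apply_ne_zero_of_forall_norm_le {ι E : Type*} [NormedAddCommGroup E] {x : ι → E}
    (hx : x ≠ 0) {k : ι} (hk : ∀ j, ‖x j‖ ≤ ‖x k‖) : x k ≠ 0 := by
  contrapose! hx
  funext j
  simpa [hx] using hk j

theorem stmt1 (n : ℕ) (P : Matrix (Fin n) (Fin n) ℝ) (d : Fin n → ℝ)
    (hP0 : ∀ i j, 0 ≤ P i j) (hP1 : ∀ i, ∑ j, P i j = 1)
    (hd : ∀ i, 0 < d i)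
    (lam : ℂ) (x : Fin n → ℂ) (hx : x ≠ 0)
    (heig : ((Matrix.diagonal d * (1 - P)).map (Complex.ofReal)).mulVec x = lam • x)
    (k : Fin n) (hk : ∀ j, ‖x j‖ ≤ ‖x k‖) :
    (lam ≠ 0 → 0 < lam.re) ∧ ‖lam‖ ^ 2 ≤ 2 * d k * lam.re := by
  have hrow : ((d k : ℂ) - lam) * x k = d k * ∑ j, P k j • x j := by
    have h := congrFun heig k
    rw [map_ofReal_diagonal_mul_one_sub_mulVec_apply, Pi.smul_apply, smul_eq_mul] at h
    linear_combination h
  have hdisc : ‖(d k : ℂ) - lam‖ ≤ |d k| := by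
    have hxk : 0 < ‖x k‖ := norm_pos_iff.mpr (apply_ne_zero_of_forall_norm_le hx hk)
    refine le_of_mul_le_mul_right ?_ hxk
    rw [← norm_mul, hrow, norm_mul, Complex.norm_real, Real.norm_eq_abs]
    exact mul_le_mul_of_nonneg_left
      (norm_sum_smul_le_of_nonneg_of_sum_eq_one (hP0 k) (hP1 k) hk) (abs_nonneg _)
  have key := Complex.sq_norm_le_two_mul_re_of_norm_ofReal_sub_le hdisc
  refine ⟨fun hlam => ?_, key⟩
  have := norm_pos_iff.mpr hlam
  nlinarith [hd k]
end

section
/- Let λ ∈ ℂ be an eigenvalue of L = D(I-P) with eigenvector x, where P is row-stochastic and D = diag(d) with d(k) > 0. If k is an index with |x(k)| = max_j |x(j)|, then |1 - λ/d(k)| ≤ 1. -/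
/-!
Row `k` of `L x = λ x` reads `(1 - λ / d k) * x k = (P x) k`, and `(P x) k` is a convex
combination of entries of modulus at most `‖x k‖`.
-/

open Matrix

theorem Matrix.diagonal_mul_one_sub_map_mulVec_apply {ι R S : Type*} [Fintype ι] [DecidableEq ι]
    [CommRing R] [CommRing S] (f : R →+* S) (d : ι → R) (P : Matrix ι ι R) (x : ι → S) (k : ι) :
    ((diagonal d * (1 - P)).map f *ᵥ x) k = f (d k) * (x k - (P.map f *ᵥ x) k) := by
  rw [show (diagonal d * (1 - P)).map f = diagonal (f ∘ d) * (1 - P.map f) by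
      rw [← RingHom.mapMatrix_apply, map_mul, map_sub, map_one, RingHom.mapMatrix_apply,
        diagonal_map (map_zero f)]
      rfl,
    ← mulVec_mulVec, mulVec_diagonal, sub_mulVec, one_mulVec]
  rfl

theorem Matrix.norm_map_mulVec_apply_le_of_rowStochastic {ι 𝕜 : Type*} [Fintype ι] [RCLike 𝕜]
    {P : Matrix ι ι ℝ} (hP0 : ∀ i j, 0 ≤ P i j) (hP1 : ∀ i, ∑ j, P i j = 1)
    {x : ι → 𝕜} {M : ℝ} (hx : ∀ j, ‖x j‖ ≤ M) (i : ι) :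
    ‖(P.map ((↑) : ℝ → 𝕜) *ᵥ x) i‖ ≤ M := by
  have hmem := (convex_closedBall (0 : 𝕜) M).sum_mem (fun j _ => hP0 i j) (hP1 i)
    (fun j _ => mem_closedBall_zero_iff.2 (hx j))
  simpa [mulVec, dotProduct, RCLike.real_smul_eq_coe_mul] using hmem

theorem stmt2 (n : ℕ) (P : Matrix (Fin n) (Fin n) ℝ) (d : Fin n → ℝ)
    (hP0 : ∀ i j, 0 ≤ P i j) (hP1 : ∀ i, ∑ j, P i j = 1)
    (hd : ∀ i, 0 < d i)
    (lam : ℂ) (x : Fin n → ℂ) (hx : x ≠ 0)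
    (heig : ((Matrix.diagonal d * (1 - P)).map (Complex.ofReal)).mulVec x = lam • x)
    (k : Fin n) (hk : ∀ j, ‖x j‖ ≤ ‖x k‖) :
    ‖1 - lam / (d k : ℂ)‖ ≤ 1 := by
  have hxk : 0 < ‖x k‖ := by
    obtain ⟨j, hj⟩ := Function.ne_iff.1 hx
    exact (norm_pos_iff.2 hj).trans_le (hk j)
  have hdk : (d k : ℂ) ≠ 0 := Complex.ofReal_ne_zero.2 (hd k).ne'
  have hrow : (d k : ℂ) * (x k - (P.map Complex.ofReal *ᵥ x) k) = lam * x k :=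
    (diagonal_mul_one_sub_map_mulVec_apply Complex.ofRealHom d P x k).symm.trans (congrFun heig k)
  have hscaled : (1 - lam / (d k : ℂ)) * x k = (P.map Complex.ofReal *ᵥ x) k := by
    field_simp
    linear_combination hrow
  have hbound : ‖1 - lam / (d k : ℂ)‖ * ‖x k‖ ≤ 1 * ‖x k‖ := by
    rw [← norm_mul, hscaled, one_mul]
    exact norm_map_mulVec_apply_le_of_rowStochastic hP0 hP1 hk k
  exact le_of_mul_le_mul_right hbound hxk
end

section
/- If P is an irreducible row-stochastic matrix, then the kernel of I - P (as a linear map on ℝ^n) is one-dimensional and spanned by the all-ones vector e. -/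
open Matrix

theorem stmt3 (n : ℕ) (P : Matrix (Fin n) (Fin n) ℝ)
    (hP0 : ∀ i j, 0 ≤ P i j) (hP1 : ∀ i, ∑ j, P i j = 1)
    (hirr : ∀ i j, ∃ m : ℕ, 0 < (P ^ m) i j) :
    ((1 - P).mulVec (fun _ => (1 : ℝ)) = 0) ∧
    ∀ x : Fin n → ℝ, (1 - P).mulVec x = 0 → ∃ c : ℝ, x = fun _ => c := by
  -- powers of P are nonneg with row sums 1
  have hpow0 : ∀ m : ℕ, ∀ i j, 0 ≤ (P ^ m) i j := by
    intro m
    induction m with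
    | zero => intro i j; simp [Matrix.one_apply]; positivity
    | succ m ih =>
      intro i j
      rw [pow_succ, Matrix.mul_apply]
      exact Finset.sum_nonneg fun k _ => mul_nonneg (ih i k) (hP0 k j)
  have hpow1 : ∀ m : ℕ, ∀ i, ∑ j, (P ^ m) i j = 1 := by
    intro m
    induction m with
    | zero => intro i; simp [Matrix.one_apply]
    | succ m ih =>
      intro i
      simp only [pow_succ, Matrix.mul_apply]
      rw [Finset.sum_comm]
      calc ∑ k, ∑ j, (P ^ m) i k * P k j
          = ∑ k, (P ^ m) i k * ∑ j, P k j := by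
            simp [Finset.mul_sum]
        _ = 1 := by simp [hP1, ih]
  constructor
  · funext i
    simp [Matrix.mulVec, dotProduct, Matrix.sub_apply, Matrix.one_apply,
      sub_mul, Finset.sum_sub_distrib, hP1]
  · intro x hx
    rcases Nat.eq_zero_or_pos n with hn | hn
    · exact ⟨0, funext fun i => absurd i.2 (by omega)⟩
    have hfix : P.mulVec x = x := by
      have h := hx
      rw [Matrix.sub_mulVec, Matrix.one_mulVec, sub_eq_zero] at h
      exact h.symm
    have hfixpow : ∀ m : ℕ, (P ^ m).mulVec x = x := by
      intro m
      induction m with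
      | zero => simp
      | succ m ih =>
        rw [pow_succ, ← Matrix.mulVec_mulVec, hfix, ih]
    -- take i0 achieving the max
    haveI : Nonempty (Fin n) := ⟨⟨0, hn⟩⟩
    obtain ⟨i0, -, hi0⟩ := Finset.exists_max_image (Finset.univ : Finset (Fin n)) x
      ⟨⟨0, hn⟩, Finset.mem_univ _⟩
    refine ⟨x i0, funext fun j => ?_⟩
    obtain ⟨m, hm⟩ := hirr i0 j
    have hsum : ∑ k, (P ^ m) i0 k * (x i0 - x k) = 0 := by
      have h1 : ∑ k, (P ^ m) i0 k * x k = x i0 := by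
        have := congrFun (hfixpow m) i0
        simpa [Matrix.mulVec, dotProduct] using this
      simp [mul_sub, Finset.sum_sub_distrib, h1, ← Finset.sum_mul, hpow1 m i0]
    have hterm : ∀ k ∈ Finset.univ, (0:ℝ) ≤ (P ^ m) i0 k * (x i0 - x k) :=
      fun k _ => mul_nonneg (hpow0 m i0 k) (sub_nonneg.mpr (hi0 k (Finset.mem_univ k)))
    have hzero := (Finset.sum_eq_zero_iff_of_nonneg hterm).mp hsum j (Finset.mem_univ j)
    have : x i0 - x j = 0 := by
      rcases mul_eq_zero.mp hzero with h | h
      · exact absurd h (ne_of_gt hm)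
      · exact h
    linarith
end

section
/- Let P be an irreducible row-stochastic matrix with stationary distribution d_π (d_π^T P = d_π^T, d_π > 0), D = diag(d_μ) with d_μ > 0, and A_η = D(I - P) + η·d_μ·e^T for η > 0. Then A_η is nonsingular, i.e., 0 is not an eigenvalue of A_η. -/
open Matrix

lemma stmt4_pow_nonneg {n : ℕ} (P : Matrix (Fin n) (Fin n) ℝ)
    (hP0 : ∀ i j, 0 ≤ P i j) (m : ℕ) : ∀ i j, 0 ≤ (P ^ m) i j := by
  induction m with
  | zero =>
    intro i j
    by_cases h : i = j <;> simp [Matrix.one_apply, h]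
  | succ m ih =>
    intro i j
    rw [pow_succ, Matrix.mul_apply]
    exact Finset.sum_nonneg fun k _ => mul_nonneg (ih i k) (hP0 k j)

lemma stmt4_pow_rowsum {n : ℕ} (P : Matrix (Fin n) (Fin n) ℝ)
    (hP1 : ∀ i, ∑ j, P i j = 1) (m : ℕ) : ∀ i, ∑ j, (P ^ m) i j = 1 := by
  induction m with
  | zero => intro i; simp [Matrix.one_apply]
  | succ m ih =>
    intro i
    simp only [pow_succ, Matrix.mul_apply]
    rw [Finset.sum_comm]
    calc ∑ k, ∑ j, (P ^ m) i k * P k j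
        = ∑ k, (P ^ m) i k * ∑ j, P k j := by
          simp [Finset.mul_sum]
      _ = 1 := by simp [hP1, ih i]

lemma stmt4_eigen_const {n : ℕ} (P : Matrix (Fin n) (Fin n) ℝ)
    (hP0 : ∀ i j, 0 ≤ P i j) (hP1 : ∀ i, ∑ j, P i j = 1)
    (hirr : ∀ i j, ∃ m : ℕ, 0 < (P ^ m) i j)
    (x : Fin n → ℝ) (hx : P *ᵥ x = x) (a b : Fin n) : x a = x b := by
  have hpow : ∀ m : ℕ, (P ^ m) *ᵥ x = x := by
    intro m
    induction m with
    | zero => simp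
    | succ m ih => rw [pow_succ, ← Matrix.mulVec_mulVec, hx, ih]
  obtain ⟨i, -, hi⟩ := Finset.exists_max_image Finset.univ x ⟨a, Finset.mem_univ a⟩
  have key : ∀ j, x j = x i := by
    intro j
    obtain ⟨m, hm⟩ := hirr i j
    by_contra hne
    have hlt : x j < x i := lt_of_le_of_ne (hi j (Finset.mem_univ j)) hne
    have hxi : x i = ∑ k, (P ^ m) i k * x k := by
      have := congrFun (hpow m) i
      rw [Matrix.mulVec, dotProduct] at this
      exact this.symm
    have hsl : ∑ k, (P ^ m) i k * x k < ∑ k, (P ^ m) i k * x i := by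
      apply Finset.sum_lt_sum
      · intro k _
        exact mul_le_mul_of_nonneg_left (hi k (Finset.mem_univ k))
          (stmt4_pow_nonneg P hP0 m i k)
      · exact ⟨j, Finset.mem_univ j, by nlinarith⟩
    rw [← Finset.sum_mul, stmt4_pow_rowsum P hP1 m i, one_mul, ← hxi] at hsl
    exact lt_irrefl _ hsl
  rw [key a, key b]

theorem stmt4 (n : ℕ) (P : Matrix (Fin n) (Fin n) ℝ)
    (hP0 : ∀ i j, 0 ≤ P i j) (hP1 : ∀ i, ∑ j, P i j = 1)
    (hirr : ∀ i j, ∃ m : ℕ, 0 < (P ^ m) i j)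
    (dπ : Fin n → ℝ) (hdπpos : ∀ i, 0 < dπ i) (hstat : Matrix.vecMul dπ P = dπ)
    (dμ : Fin n → ℝ) (hdμ : ∀ i, 0 < dμ i)
    (η : ℝ) (hη : 0 < η) :
    (Matrix.diagonal dμ * (1 - P) + η • Matrix.of (fun i _ => dμ i)).det ≠ 0 := by
  intro hdet
  obtain ⟨x, hx0, hAx⟩ := Matrix.exists_mulVec_eq_zero_iff.mpr hdet
  set y := (1 - P) *ᵥ x with hy
  set s := ∑ j, x j with hs
  -- componentwise equation
  have h1 : ∀ i, dμ i * y i + η * (dμ i * s) = 0 := by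
    intro i
    have h := congrFun hAx i
    rw [Matrix.add_mulVec, Pi.add_apply, ← Matrix.mulVec_mulVec,
      Matrix.smul_mulVec, Pi.smul_apply] at h
    have hd : (Matrix.diagonal dμ *ᵥ y) i = dμ i * y i := by
      simp [Matrix.mulVec_diagonal, Matrix.diagonal_mulVec_single, Matrix.mulVec,
        dotProduct, Matrix.diagonal_apply]
    have ho : ((Matrix.of (fun i _ => dμ i)) *ᵥ x) i = dμ i * s := by
      simp [Matrix.mulVec, dotProduct, hs, Finset.mul_sum]
    rw [hd, ho] at h
    simpa using h
  -- dπ kills the first part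
  have hsum : ∑ i, dπ i * y i = 0 := by
    have : dπ ⬝ᵥ ((1 - P) *ᵥ x) = (Matrix.vecMul dπ (1 - P)) ⬝ᵥ x :=
      Matrix.dotProduct_mulVec _ _ _
    rw [Matrix.vecMul_sub, Matrix.vecMul_one, hstat, sub_self, zero_dotProduct] at this
    simpa [dotProduct, hy] using this
  have h2 : η * s * (∑ i, dπ i) = 0 := by
    have hzero : ∑ i, (dπ i / dμ i) * (dμ i * y i + η * (dμ i * s)) = 0 := by
      simp [h1]
    have hexp : ∀ i, (dπ i / dμ i) * (dμ i * y i + η * (dμ i * s))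
        = dπ i * y i + η * s * dπ i := by
      intro i
      field_simp [(hdμ i).ne']
    rw [Finset.sum_congr rfl (fun i _ => hexp i), Finset.sum_add_distrib,
      hsum, zero_add, ← Finset.mul_sum] at hzero
    exact hzero
  -- so s = 0
  have hsz : s = 0 := by
    rcases Nat.eq_zero_or_pos n with hn | hn
    · subst hn; simp [hs]
    · haveI : Nonempty (Fin n) := Fin.pos_iff_nonempty.mp hn
      have hS : 0 < ∑ i, dπ i := Finset.sum_pos (fun i _ => hdπpos i) Finset.univ_nonempty
      rcases mul_eq_zero.mp h2 with h | h
      · rcases mul_eq_zero.mp h with h | h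
        · exact absurd h hη.ne'
        · exact h
      · exact absurd h hS.ne'
  -- hence (1-P)x = 0, so Px = x
  have hyz : ∀ i, y i = 0 := by
    intro i
    have h := h1 i
    rw [hsz, mul_zero, mul_zero, add_zero] at h
    exact (mul_eq_zero.mp h).resolve_left (hdμ i).ne'
  have hPx : P *ᵥ x = x := by
    funext i
    have hyi : y i = x i - (P *ᵥ x) i := by
      simp [hy, Matrix.sub_mulVec, Matrix.one_mulVec]
    have h0 := hyz i
    rw [hyi] at h0
    linarith
  -- x is constant
  obtain ⟨i, hxi⟩ := Function.ne_iff.mp hx0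
  have hconst : ∀ j, x j = x i := fun j =>
    stmt4_eigen_const P hP0 hP1 hirr x hPx j i
  have hcard : s = (n : ℝ) * x i := by
    rw [hs, Finset.sum_congr rfl (fun j _ => hconst j)]
    simp [Finset.card_univ, mul_comm]
  rw [hsz] at hcard
  have hn0 : (n : ℝ) ≠ 0 := Nat.cast_ne_zero.mpr (fun h => (h ▸ i).elim0)
  rcases mul_eq_zero.mp hcard.symm with h' | h'
  · exact hn0 h'
  · exact hxi h'
end

section
/- A monic real cubic polynomial s³ + a·s² + b·s + c has all roots with strictly negative real part if and only if a > 0, b > 0, c > 0, and a·b > c. -/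
open Polynomial in
private theorem rh_cubic_root (a b c : ℝ) : ∃ r : ℂ, r^3 + a*r^2 + b*r + c = 0 := by
  have hd : (X^3 + C (a:ℂ) * X^2 + C (b:ℂ) * X + C (c:ℂ)).degree = 3 := by compute_degree!
  obtain ⟨r, hr⟩ := Complex.exists_root (f := X^3 + C (a:ℂ) * X^2 + C (b:ℂ) * X + C (c:ℂ))
    (by rw [hd]; norm_num)
  exact ⟨r, by simpa [IsRoot] using hr⟩

open Polynomial in
private theorem rh_exists_sqrt (d : ℂ) : ∃ s : ℂ, s^2 = d := by
  have hd : (X^2 - C d : ℂ[X]).degree = 2 := by compute_degree!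
  obtain ⟨s, hs⟩ := Complex.exists_root (f := X^2 - C d) (by rw [hd]; norm_num)
  exact ⟨s, by simpa [IsRoot, sub_eq_zero] using hs⟩

private theorem rh_keyReal (a b c x1 x2 x3 : ℝ) (hx1 : x1 < 0) (hx2 : x2 < 0) (hx3 : x3 < 0)
    (e1 : x1 + x2 + x3 = -a)
    (e2 : x1*x2 + x1*x3 + x2*x3 = b)
    (e3 : x1*x2*x3 = -c) :
    0 < a ∧ 0 < b ∧ 0 < c ∧ c < a * b := by
  have ha : a = -(x1+x2+x3) := by linarith
  have hc' : c = -(x1*x2*x3) := by linarith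
  have key : a*b - c = -((x1+x2)*(x1+x3)*(x2+x3)) := by rw [ha, ← e2, hc']; ring
  refine ⟨by linarith, ?_, ?_, ?_⟩
  · nlinarith [mul_pos_of_neg_of_neg hx1 hx2, mul_pos_of_neg_of_neg hx1 hx3,
      mul_pos_of_neg_of_neg hx2 hx3]
  · nlinarith [mul_pos_of_neg_of_neg hx1 hx2, mul_pos_of_neg_of_neg hx1 hx3]
  · nlinarith [key, mul_pos (mul_pos_of_neg_of_neg (show x1+x2 < 0 by linarith)
      (show x1+x3 < 0 by linarith)) (neg_pos.mpr (show x2+x3 < 0 by linarith))]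

private theorem rh_keyPair (a b c x1 x2 x3 y1 y2 y3 : ℝ)
    (hx1 : x1 < 0) (hx2 : x2 < 0) (hx3 : x3 < 0)
    (e1 : x1 + x2 + x3 = -a)
    (e2 : x1*x2 - y1*y2 + (x1*x3 - y1*y3) + (x2*x3 - y2*y3) = b)
    (e3 : x1*x2*x3 - x1*y2*y3 - x2*y1*y3 - x3*y1*y2 = -c)
    (hx21 : x2 = x1) (hy21 : y2 = -y1) (hy3 : y3 = 0) :
    0 < a ∧ 0 < b ∧ 0 < c ∧ c < a * b := by
  subst hx21 hy21 hy3
  have ha : a = -(x2+x2+x3) := by linarith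
  have hb : b = x2*x2 + y1*y1 + 2*(x2*x3) := by linear_combination -e2
  have hc' : c = -(x2*x2*x3 + y1*y1*x3) := by linear_combination e3
  have key : a*b - c = -(2*x2)*((x2+x3)^2 + y1^2) := by rw [ha, hb, hc']; ring
  refine ⟨by linarith, ?_, ?_, ?_⟩
  · nlinarith [hb, mul_pos_of_neg_of_neg hx2 hx2, mul_pos_of_neg_of_neg hx2 hx3, sq_nonneg y1]
  · nlinarith [hc', mul_pos (neg_pos.mpr hx3) (mul_pos_of_neg_of_neg hx2 hx2),
      mul_nonneg (neg_nonneg.mpr hx3.le) (mul_self_nonneg y1)]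
  · have hpos : (0:ℝ) < (x2+x3)^2 + y1^2 := by
      nlinarith [sq_nonneg y1, sq_nonneg (x2+x3), sq_abs (x2+x3),
        abs_pos.mpr (show x2+x3 ≠ 0 by intro h; linarith)]
    nlinarith [key, mul_pos (neg_pos.mpr (show 2*x2 < 0 by linarith)) hpos]

theorem stmt8 (a b c : ℝ) :
    (∀ z : ℂ, z ^ 3 + (a : ℂ) * z ^ 2 + (b : ℂ) * z + (c : ℂ) = 0 → z.re < 0)
      ↔ (0 < a ∧ 0 < b ∧ 0 < c ∧ c < a * b) := by
  constructor
  · intro h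
    obtain ⟨r1, h1⟩ := rh_cubic_root a b c
    obtain ⟨s, hs⟩ := rh_exists_sqrt (((a:ℂ) + r1)^2 - 4*((b:ℂ) + a*r1 + r1^2))
    set r2 : ℂ := (-((a:ℂ) + r1) + s)/2 with hr2
    set r3 : ℂ := (-((a:ℂ) + r1) - s)/2 with hr3
    have V1 : r1 + r2 + r3 = -(a:ℂ) := by rw [hr2, hr3]; ring
    have V2 : r1*r2 + r1*r3 + r2*r3 = (b:ℂ) := by
      rw [hr2, hr3]; linear_combination (-1/4 : ℂ)*hs
    have V3 : r1*r2*r3 = -(c:ℂ) := by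
      rw [hr2, hr3]; linear_combination (-r1/4)*hs + h1
    have hF : ∀ z : ℂ, z^3 + a*z^2 + b*z + c = (z - r1)*(z - r2)*(z - r3) := by
      intro z; linear_combination z^2*V1 - z*V2 + V3
    have h2 : r2^3 + a*r2^2 + b*r2 + c = 0 := by rw [hF r2]; ring
    have hx1 : r1.re < 0 := h r1 h1
    have hx2 : r2.re < 0 := h r2 h2
    have hx3 : r3.re < 0 := h r3 (by rw [hF r3]; ring)
    have hconj : ∀ z : ℂ, z^3 + a*z^2 + b*z + c = 0 →
        (starRingEnd ℂ) z = r1 ∨ (starRingEnd ℂ) z = r2 ∨ (starRingEnd ℂ) z = r3 := by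
      intro z hz
      have hz' : ((starRingEnd ℂ) z)^3 + a*((starRingEnd ℂ) z)^2
          + b*((starRingEnd ℂ) z) + c = 0 := by
        have := congrArg (starRingEnd ℂ) hz
        simpa [map_add, map_mul, map_pow, Complex.conj_ofReal] using this
      have hprod := hF ((starRingEnd ℂ) z)
      rw [hz'] at hprod
      rcases mul_eq_zero.mp hprod.symm with h' | h'
      · rcases mul_eq_zero.mp h' with h'' | h''
        · exact Or.inl (by linear_combination h'')
        · exact Or.inr (Or.inl (by linear_combination h''))
      · exact Or.inr (Or.inr (by linear_combination h'))
    have E1a : r1.re + r2.re + r3.re = -a := by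
      have := congrArg Complex.re V1
      simp only [Complex.add_re, Complex.neg_re, Complex.ofReal_re] at this
      linarith
    have E1b : r1.im + r2.im + r3.im = 0 := by
      have := congrArg Complex.im V1
      simp only [Complex.add_im, Complex.neg_im, Complex.ofReal_im] at this
      linarith
    have E2a : r1.re*r2.re - r1.im*r2.im + (r1.re*r3.re - r1.im*r3.im)
        + (r2.re*r3.re - r2.im*r3.im) = b := by
      have := congrArg Complex.re V2
      simp only [Complex.add_re, Complex.mul_re, Complex.ofReal_re] at this
      linear_combination this
    have E3a : (r1.re*r2.re - r1.im*r2.im)*r3.re - (r1.re*r2.im + r1.im*r2.re)*r3.im = -c := by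
      have := congrArg Complex.re V3
      simp only [Complex.mul_re, Complex.mul_im, Complex.neg_re, Complex.ofReal_re] at this
      linear_combination this
    rcases hconj r1 h1 with hc1 | hc1 | hc1
    · -- r1 real
      have hy1 : r1.im = 0 := Complex.conj_eq_iff_im.mp hc1
      rcases hconj r2 h2 with hc2 | hc2 | hc2
      · -- r2 = conj r1 = r1, all real
        have hy2 : r2.im = 0 := by
          have := congrArg Complex.im hc2
          simp only [Complex.conj_im] at this
          linarith [hy1]
        have hy3 : r3.im = 0 := by linarith [E1b]
        rw [hy1, hy2, hy3] at E2a E3a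
        exact rh_keyReal a b c r1.re r2.re r3.re hx1 hx2 hx3 (by linarith)
          (by linear_combination E2a) (by linear_combination E3a)
      · -- r2 real
        have hy2 : r2.im = 0 := Complex.conj_eq_iff_im.mp hc2
        have hy3 : r3.im = 0 := by linarith [E1b]
        rw [hy1, hy2, hy3] at E2a E3a
        exact rh_keyReal a b c r1.re r2.re r3.re hx1 hx2 hx3 (by linarith)
          (by linear_combination E2a) (by linear_combination E3a)
      · -- conj r2 = r3 : pair (2,3), real 1
        have hxp : r3.re = r2.re := by rw [← hc2, Complex.conj_re]
        have hyp : r3.im = -r2.im := by rw [← hc2, Complex.conj_im]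
        exact rh_keyPair a b c r2.re r3.re r1.re r2.im r3.im r1.im hx2 hx3 hx1
          (by linarith) (by linear_combination E2a) (by linear_combination E3a)
          hxp hyp hy1
    · -- conj r1 = r2 : pair (1,2), real 3
      have hxp : r2.re = r1.re := by rw [← hc1, Complex.conj_re]
      have hyp : r2.im = -r1.im := by rw [← hc1, Complex.conj_im]
      have hy3 : r3.im = 0 := by rw [hyp] at E1b; linarith
      exact rh_keyPair a b c r1.re r2.re r3.re r1.im r2.im r3.im hx1 hx2 hx3
        E1a E2a (by linear_combination E3a) hxp hyp hy3
    · -- conj r1 = r3 : pair (1,3), real 2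
      have hxp : r3.re = r1.re := by rw [← hc1, Complex.conj_re]
      have hyp : r3.im = -r1.im := by rw [← hc1, Complex.conj_im]
      have hy2 : r2.im = 0 := by rw [hyp] at E1b; linarith
      exact rh_keyPair a b c r1.re r3.re r2.re r1.im r3.im r2.im hx1 hx3 hx2
        (by linarith) (by linear_combination E2a) (by linear_combination E3a)
        hxp hyp hy2
  · rintro ⟨ha, hb, hc, hab⟩ z hz
    by_contra hx
    push_neg at hx
    have h1 : (z ^ 3 + (a : ℂ) * z ^ 2 + (b : ℂ) * z + (c : ℂ)).re = 0 := by rw [hz]; simp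
    have h2 : (z ^ 3 + (a : ℂ) * z ^ 2 + (b : ℂ) * z + (c : ℂ)).im = 0 := by rw [hz]; simp
    simp [Complex.add_re, Complex.add_im, Complex.mul_re, Complex.mul_im, pow_succ, pow_zero,
      Complex.ofReal_re, Complex.ofReal_im] at h1 h2
    set x := z.re with hxd
    set y := z.im with hyd
    rcases mul_eq_zero.mp (show y * (3*x^2 + 2*a*x + b - y^2) = 0 by nlinarith [h2]) with hy | hy
    · rw [hy] at h1
      nlinarith [h1, pow_nonneg hx 3, mul_nonneg (mul_nonneg ha.le hx) hx, mul_nonneg hb.le hx]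
    · nlinarith [h1, hy, mul_nonneg (mul_nonneg hx hx) hx, mul_nonneg hx hx,
        mul_nonneg ha.le (mul_nonneg hx hx), mul_nonneg (mul_nonneg ha.le ha.le) hx,
        mul_nonneg hb.le hx]
end

section
/- Let m > 22 be an integer, α = (m-22)/(m²+m-2), r = (m, 1, 1)^T, d̄ = (α, α, 1-(m+1)α)^T, and C the 3×3 cyclic permutation matrix sending 1→2→3→1 (C(1,2)=C(2,3)=C(3,1)=1). Then for every real t, det(zI - (C - t·d̄·r^T)) = z³ - 1 + t(z² + z + 22). -/
/-!
By the matrix determinant lemma, the rank-one term `t • (dbar * rᵀ)` adds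
`t * (r ⬝ᵥ adj(z • 1 - C) *ᵥ dbar)` to `det (z • 1 - C) = z ^ 3 - 1`.
For `dbar = (a, a, 1 - (m + 1) a)` this inner product is `z ^ 2 + z + (m - a (m ^ 2 + m - 2))`,
and `α` is chosen so that the constant term is `22`.
-/

open Matrix

variable {R : Type*} [CommRing R]

theorem Matrix.det_add_vecMulVec_fin_three (A : Matrix (Fin 3) (Fin 3) R) (u v : Fin 3 → R) :
    (A + vecMulVec u v).det = A.det + v ⬝ᵥ A.adjugate *ᵥ u := by
  simp only [det_fin_three, adjugate_fin_three, Matrix.add_apply, vecMulVec_apply, of_apply,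
    dotProduct, mulVec, Fin.sum_univ_three, cons_val', cons_val_zero, cons_val_one, cons_val,
    cons_val_fin_one]
  ring

theorem det_smul_one_sub_cyclic (z : R) :
    (z • (1 : Matrix (Fin 3) (Fin 3) R) - !![0, 1, 0; 0, 0, 1; 1, 0, 0]).det = z ^ 3 - 1 := by
  simp only [det_fin_three, Matrix.sub_apply, Matrix.smul_apply, one_apply,
    Fin.reduceEq, ite_true, ite_false, of_apply, cons_val', cons_val_zero, cons_val_one, cons_val,
    cons_val_fin_one, smul_eq_mul]
  ring

theorem dotProduct_adjugate_smul_one_sub_cyclic_mulVec (m a z : R) :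
    ![m, 1, 1] ⬝ᵥ (z • (1 : Matrix (Fin 3) (Fin 3) R) - !![0, 1, 0; 0, 0, 1; 1, 0, 0]).adjugate
      *ᵥ ![a, a, 1 - (m + 1) * a] = z ^ 2 + z + (m - a * (m ^ 2 + m - 2)) := by
  simp only [adjugate_fin_three, dotProduct, mulVec, Fin.sum_univ_three, Matrix.sub_apply,
    Matrix.smul_apply, one_apply, Fin.reduceEq, ite_true, ite_false, of_apply, cons_val',
    cons_val_zero, cons_val_one, cons_val, cons_val_fin_one, smul_eq_mul]
  ring

theorem stmt11 (m : ℕ) (hm : 22 < m) (t : ℝ) (z : ℂ) :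
    let α : ℝ := ((m : ℝ) - 22) / ((m : ℝ) ^ 2 + m - 2)
    let C : Matrix (Fin 3) (Fin 3) ℂ := !![0, 1, 0; 0, 0, 1; 1, 0, 0]
    let r : Fin 3 → ℂ := ![(m : ℂ), 1, 1]
    let dbar : Fin 3 → ℂ := ![(α : ℂ), (α : ℂ), 1 - ((m : ℂ) + 1) * (α : ℂ)]
    (z • (1 : Matrix (Fin 3) (Fin 3) ℂ) - (C - (t : ℂ) • Matrix.of (fun i j => dbar i * r j))).det
      = z ^ 3 - 1 + (t : ℂ) * (z ^ 2 + z + 22) := by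
  intro α C r dbar
  have hden : (m : ℝ) ^ 2 + m - 2 ≠ 0 := by
    have : (23 : ℝ) ≤ m := by exact_mod_cast hm
    nlinarith
  have hα : (α : ℂ) * ((m : ℂ) ^ 2 + m - 2) = m - 22 := by
    have h : ((α * ((m : ℝ) ^ 2 + m - 2) : ℝ) : ℂ) = ((m - 22 : ℝ) : ℂ) :=
      congrArg _ (div_mul_cancel₀ _ hden)
    push_cast at h
    exact h
  have hsplit : z • 1 - (C - (t : ℂ) • of fun i j => dbar i * r j)
      = z • 1 - C + vecMulVec ((t : ℂ) • dbar) r := by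
    ext i j
    simp only [Matrix.sub_apply, Matrix.add_apply, Matrix.smul_apply, of_apply, vecMulVec_apply,
      Pi.smul_apply, smul_eq_mul]
    ring
  rw [hsplit, det_add_vecMulVec_fin_three, mulVec_smul, dotProduct_smul, det_smul_one_sub_cyclic,
    dotProduct_adjugate_smul_one_sub_cyclic_mulVec, hα, smul_eq_mul]
  ring
end

section
/- Let m > 22 be an integer and α = (m-22)/(m²+m-2). There exists a strictly positive probability vector d_μ ∈ ℝ^{m+2} and an irreducible, aperiodic row-stochastic matrix P ∈ ℝ^{(m+2)×(m+2)} such that, writing D = diag(d_μ) and A_η = D(I - P + η·e·e^T), the matrix A_η has all eigenvalues with strictly positive real part if and only if η ∈ (0, α) ∪ (3α, ∞). -/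
/-!
The chain sends every `a_k` to `b` and `b` to `c`; from `c` it stays with probability `1 - s` and
jumps to each `a_k` with probability `s / m`. The weights are `α` on the `a_k` and on `b`, and
`r = 1 - (m + 1) α` on `c`, with `s = α / r`. Every state reaches `c` in two steps and `c` reaches
every state in two steps, so `P ^ 4 > 0`.

If `A_η x = λ x` with `λ ≠ α`, the rows of the `a_k` force `x` to be constant on the `a_k`, so
`x` is the lift of an eigenvector of the `3 × 3` matrix by which `A_η` acts on such vectors; conversely
eigenvectors of that matrix lift. Thanks to `(m + 1) α + r = 1` and `(m + 2) (r + 2α) = 24` its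
characteristic polynomial is `λ³ - (3α + η) λ² + 3α (α + η) λ - 24 α² η`, and by the
Routh–Hurwitz criterion for cubics its roots lie in the right half-plane iff
`24 α² η < 3α (α + η) (3α + η)`, i.e. iff `(η - α) (η - 3α) > 0`.
-/

open Matrix

theorem re_neg_of_cubic_eq_zero {a b c : ℝ} (ha : 0 < a) (hc : 0 < c) (habc : c < a * b)
    {z : ℂ} (hz : z ^ 3 + a * z ^ 2 + b * z + c = 0) : z.re < 0 := by
  have hb : 0 < b := by nlinarith
  have hre := congrArg Complex.re hz
  have him := congrArg Complex.im hz
  simp only [Complex.add_re, Complex.add_im, Complex.mul_re, Complex.mul_im, Complex.ofReal_re,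
    Complex.ofReal_im, Complex.zero_re, Complex.zero_im, pow_succ, pow_zero, one_mul] at hre him
  set x := z.re
  set y := z.im
  by_contra! hx
  rcases eq_or_ne y 0 with hy | hy
  · rw [hy] at hre
    nlinarith [pow_nonneg hx 3, sq_nonneg x]
  · have hy2 : 3 * x ^ 2 + 2 * a * x + b - y ^ 2 = 0 := by
      have : y * (3 * x ^ 2 + 2 * a * x + b - y ^ 2) = 0 := by linear_combination him
      exact (mul_eq_zero.mp this).resolve_left hy
    -- eliminating `y ^ 2` from the real part leaves a cubic in `x` with positive coefficients
    have hx3 : 8 * x ^ 3 + 8 * a * x ^ 2 + 2 * (a ^ 2 + b) * x + (a * b - c) = 0 := by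
      linear_combination (-1) * hre + (3 * x + a) * hy2
    nlinarith [pow_nonneg hx 3, mul_nonneg (sq_nonneg x) ha.le, mul_nonneg hx hb.le,
      mul_nonneg hx (sq_nonneg a)]

theorem exists_cubic_eq_zero_and_re_nonneg {a b c : ℝ} (ha : 0 < a) (hb : 0 < b) (hc : 0 < c)
    (habc : a * b ≤ c) : ∃ z : ℂ, z ^ 3 + a * z ^ 2 + b * z + c = 0 ∧ 0 ≤ z.re := by
  obtain ⟨r, hr⟩ : ∃ r : ℝ, r ^ 3 + a * r ^ 2 + b * r + c = 0 := by
    have hT : 1 ≤ 1 + a + b + c := by linarith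
    obtain ⟨r, -, hr⟩ := intermediate_value_Icc (by linarith : -(1 + a + b + c) ≤ 0)
      (f := fun x : ℝ => x ^ 3 + a * x ^ 2 + b * x + c) (by fun_prop)
      (show (0 : ℝ) ∈ Set.Icc _ _ from
        ⟨by nlinarith [sq_nonneg (1 + a + b + c)], by simpa using hc.le⟩)
    exact ⟨r, hr⟩
  -- the cubic factors as `(z - r) * (z ^ 2 + p * z + q)`, and `a * b - c = p * (b + r ^ 2)`
  set p := a + r
  set q := b + a * r + r ^ 2
  have hp : p ≤ 0 := by
    have : p * (b + r ^ 2) ≤ 0 := by linear_combination hr + habc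
    nlinarith [sq_nonneg r]
  obtain ⟨s, hs, hs_re⟩ : ∃ s : ℂ, discrim 1 (p : ℂ) q = s * s ∧ 0 ≤ s.re := by
    obtain ⟨s, hs⟩ := IsAlgClosed.exists_eq_mul_self (discrim 1 (p : ℂ) q)
    rcases le_total 0 s.re with h | h
    · exact ⟨s, hs, h⟩
    · exact ⟨-s, by rw [hs]; ring, by simpa using h⟩
  refine ⟨(-p + s) / 2, ?_, ?_⟩
  · have hquad : ((-p + s) / 2) ^ 2 + p * ((-p + s) / 2) + q = 0 := by
      rw [discrim] at hs
      linear_combination (-1 / 4 : ℂ) * hs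
    have hrC : (r : ℂ) ^ 3 + a * r ^ 2 + b * r + c = 0 := by exact_mod_cast hr
    simp only [p, q] at hquad ⊢
    push_cast at hquad ⊢
    linear_combination ((-(a + r) + s) / 2 - r) * hquad + hrC
  · simp only [Complex.div_re, Complex.add_re, Complex.neg_re, Complex.ofReal_re]
    norm_num
    linarith

theorem forall_cubic_eq_zero_re_neg_iff {a b c : ℝ} (ha : 0 < a) (hb : 0 < b) (hc : 0 < c) :
    (∀ z : ℂ, z ^ 3 + a * z ^ 2 + b * z + c = 0 → z.re < 0) ↔ c < a * b := by
  refine ⟨fun h => ?_, fun habc z hz => re_neg_of_cubic_eq_zero ha hc habc hz⟩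
  by_contra! habc
  obtain ⟨z, hz, hre⟩ := exists_cubic_eq_zero_and_re_nonneg ha hb hc habc
  exact (h z hz).not_ge hre

noncomputable def shiftedLaplacian {n : Type*} [Fintype n] [DecidableEq n] (d : n → ℝ)
    (P : Matrix n n ℝ) (η : ℝ) : Matrix n n ℂ :=
  (diagonal d * (1 - P + η • of fun _ _ => (1 : ℝ))).map Complex.ofReal

theorem shiftedLaplacian_mulVec_apply {n : Type*} [Fintype n] [DecidableEq n] (d : n → ℝ)
    (P : Matrix n n ℝ) (η : ℝ) (x : n → ℂ) (i : n) :
    (shiftedLaplacian d P η *ᵥ x) i =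
      d i * (x i - (P.map Complex.ofReal *ᵥ x) i + η * ∑ j, x j) := by
  simp only [shiftedLaplacian, mulVec, dotProduct, map_apply, diagonal_mul, Matrix.add_apply,
    Matrix.sub_apply, Matrix.smul_apply, Matrix.one_apply, of_apply, smul_eq_mul, mul_one]
  push_cast
  simp [apply_ite Complex.ofReal, mul_assoc, ← Finset.mul_sum, add_mul, sub_mul,
    Finset.sum_add_distrib]

theorem Matrix.mul_apply_pos_of_nonneg {n R : Type*} [Fintype n] [Semiring R] [PartialOrder R]
    [IsOrderedRing R] [PosMulStrictMono R] {A B : Matrix n n R} (hA : ∀ i j, 0 ≤ A i j)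
    (hB : ∀ i j, 0 ≤ B i j) {i j : n} (k : n) (hik : 0 < A i k) (hkj : 0 < B k j) :
    0 < (A * B) i j :=
  (mul_pos hik hkj).trans_le <|
    Finset.single_le_sum (fun l _ => mul_nonneg (hA i l) (hB l j)) (Finset.mem_univ k)

namespace RingChain

variable {m : ℕ}

def a (k : Fin m) : Fin (m + 2) := k.castSucc.castSucc

variable (m) in
def b : Fin (m + 2) := (Fin.last m).castSucc

variable (m) in
def c : Fin (m + 2) := Fin.last (m + 1)

@[simp] theorem a_ne_b (k : Fin m) : a k ≠ b m :=
  fun h => Fin.castSucc_ne_last k (Fin.castSucc_injective _ h)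

@[simp] theorem a_ne_c (k : Fin m) : a k ≠ c m := Fin.castSucc_ne_last _

@[simp] theorem b_ne_c : b m ≠ c m := Fin.castSucc_ne_last _

@[simp] theorem c_ne_b : c m ≠ b m := b_ne_c.symm

theorem sum_univ {M : Type*} [AddCommMonoid M] (f : Fin (m + 2) → M) :
    ∑ i, f i = ∑ k, f (a k) + f (b m) + f (c m) := by
  rw [Fin.sum_univ_castSucc, Fin.sum_univ_castSucc]
  rfl

theorem eq_a_or_eq_b_or_eq_c (i : Fin (m + 2)) : (∃ k, i = a k) ∨ i = b m ∨ i = c m := by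
  induction i using Fin.lastCases with
  | last => exact .inr (.inr rfl)
  | cast i =>
    induction i using Fin.lastCases with
    | last => exact .inr (.inl rfl)
    | cast k => exact .inl ⟨k, rfl⟩

variable (m) in
noncomputable def transMat (s : ℝ) : Matrix (Fin (m + 2)) (Fin (m + 2)) ℝ :=
  of fun i j =>
    if i = c m then (if j = c m then 1 - s else if j = b m then 0 else s / m)
    else if i = b m then (if j = c m then 1 else 0)
    else if j = b m then 1 else 0

theorem transMat_nonneg {s : ℝ} (hs0 : 0 ≤ s) (hs1 : s ≤ 1) (i j : Fin (m + 2)) :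
    0 ≤ transMat m s i j := by
  have : 0 ≤ s / m := by positivity
  simp only [transMat, of_apply]
  split_ifs <;> linarith

theorem transMat_mem_rowStochastic (hm : m ≠ 0) {s : ℝ} (hs0 : 0 ≤ s) (hs1 : s ≤ 1) :
    transMat m s ∈ rowStochastic ℝ (Fin (m + 2)) := by
  refine mem_rowStochastic_iff_sum.mpr ⟨transMat_nonneg hs0 hs1, fun i => ?_⟩
  rcases eq_a_or_eq_b_or_eq_c i with ⟨k, rfl⟩ | rfl | rfl <;> simp [sum_univ, transMat]
  field_simp
  ring

theorem map_transMat_mulVec_a (s : ℝ) (x : Fin (m + 2) → ℂ) (k : Fin m) :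
    ((transMat m s).map Complex.ofReal *ᵥ x) (a k) = x (b m) := by
  simp [mulVec, dotProduct, sum_univ, transMat]

theorem map_transMat_mulVec_b (s : ℝ) (x : Fin (m + 2) → ℂ) :
    ((transMat m s).map Complex.ofReal *ᵥ x) (b m) = x (c m) := by
  simp [mulVec, dotProduct, sum_univ, transMat]

theorem map_transMat_mulVec_c (s : ℝ) (x : Fin (m + 2) → ℂ) :
    ((transMat m s).map Complex.ofReal *ᵥ x) (c m) =
      (1 - s) * x (c m) + s / m * ∑ k, x (a k) := by
  simp [mulVec, dotProduct, sum_univ, transMat, Finset.mul_sum]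
  ring

section Primitivity

variable {s : ℝ}

theorem transMat_mul_self_apply_c_pos (hs0 : 0 < s) (hs1 : s < 1) (i : Fin (m + 2)) :
    0 < (transMat m s * transMat m s) i (c m) := by
  have hP := transMat_nonneg (m := m) hs0.le hs1.le
  rcases eq_a_or_eq_b_or_eq_c i with ⟨k, rfl⟩ | rfl | rfl
  · exact mul_apply_pos_of_nonneg hP hP (b m) (by simp [transMat]) (by simp [transMat])
  · exact mul_apply_pos_of_nonneg hP hP (c m) (by simp [transMat]) (by simp [transMat, hs1])
  · exact mul_apply_pos_of_nonneg hP hP (c m) (by simp [transMat, hs1]) (by simp [transMat, hs1])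

theorem transMat_mul_self_c_apply_pos (hm : m ≠ 0) (hs0 : 0 < s) (hs1 : s < 1) (j : Fin (m + 2)) :
    0 < (transMat m s * transMat m s) (c m) j := by
  have hP := transMat_nonneg (m := m) hs0.le hs1.le
  have hsm : 0 < s / m := div_pos hs0 (by positivity)
  rcases eq_a_or_eq_b_or_eq_c j with ⟨k, rfl⟩ | rfl | rfl
  · exact mul_apply_pos_of_nonneg hP hP (c m) (by simp [transMat, hs1]) (by simpa [transMat])
  · exact mul_apply_pos_of_nonneg hP hP (a ⟨0, Nat.pos_of_ne_zero hm⟩) (by simpa [transMat])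
      (by simp [transMat])
  · exact mul_apply_pos_of_nonneg hP hP (c m) (by simp [transMat, hs1]) (by simp [transMat, hs1])

theorem transMat_pow_four_pos (hm : m ≠ 0) (hs0 : 0 < s) (hs1 : s < 1) (i j : Fin (m + 2)) :
    0 < (transMat m s ^ 4) i j := by
  have hP := transMat_mem_rowStochastic hm hs0.le hs1.le
  have hP2 : ∀ i j, 0 ≤ (transMat m s * transMat m s) i j :=
    fun _ _ => nonneg_of_mem_rowStochastic (mul_mem hP hP)
  rw [show 4 = 2 + 2 from rfl, pow_add, sq]
  exact mul_apply_pos_of_nonneg hP2 hP2 (c m) (transMat_mul_self_apply_c_pos hs0 hs1 i)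
    (transMat_mul_self_c_apply_pos hm hs0 hs1 j)

end Primitivity

variable (m) in
noncomputable def weight (α r : ℝ) : Fin (m + 2) → ℝ := fun i => if i = c m then r else α

theorem weight_pos {α r : ℝ} (hα : 0 < α) (hr : 0 < r) (i : Fin (m + 2)) :
    0 < weight m α r i := by
  unfold weight
  split_ifs <;> assumption

theorem sum_weight (α r : ℝ) : ∑ i, weight m α r i = (m + 1) * α + r := by
  simp [sum_univ, weight]
  ring

theorem exists_parameters (hm : 22 < m) {α : ℝ} (hα : α = (m - 22) / (m ^ 2 + m - 2)) :
    ∃ r s : ℝ, 0 < α ∧ 0 < r ∧ 0 < s ∧ s < 1 ∧ r * s = α ∧ (m + 1) * α + r = 1 ∧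
      (m + 2) * (r + 2 * α) = 24 := by
  have hm' : (23 : ℝ) ≤ m := by exact_mod_cast hm
  have hD : (0 : ℝ) < m ^ 2 + m - 2 := by nlinarith
  have hαD : α * (m ^ 2 + m - 2) = m - 22 := by rw [hα, div_mul_cancel₀ _ hD.ne']
  have hαpos : 0 < α := hα ▸ div_pos (by linarith) hD
  have hr : 1 - (m + 1) * α = (22 * m + 20) / (m ^ 2 + m - 2) := by
    rw [eq_div_iff hD.ne']
    linear_combination (-(m + 1) : ℝ) * hαD
  have hrpos : 0 < 1 - (m + 1) * α := hr ▸ div_pos (by linarith) hD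
  have hαr : α < 1 - (m + 1) * α := by
    rw [hr, hα]
    exact div_lt_div_of_pos_right (by linarith) hD
  refine ⟨1 - (m + 1) * α, α / (1 - (m + 1) * α), hαpos, hrpos, div_pos hαpos hrpos,
    (div_lt_one hrpos).mpr hαr, mul_div_cancel₀ _ hrpos.ne', by ring, ?_⟩
  linear_combination (-1 : ℝ) * hαD

section Spectrum

variable {α r s η : ℝ}

theorem shiftedLaplacian_mulVec_a (x : Fin (m + 2) → ℂ) (k : Fin m) :
    (shiftedLaplacian (weight m α r) (transMat m s) η *ᵥ x) (a k) =
      α * (x (a k) - x (b m) + η * ∑ j, x j) := by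
  simp [shiftedLaplacian_mulVec_apply, map_transMat_mulVec_a, weight]

theorem shiftedLaplacian_mulVec_b (x : Fin (m + 2) → ℂ) :
    (shiftedLaplacian (weight m α r) (transMat m s) η *ᵥ x) (b m) =
      α * (x (b m) - x (c m) + η * ∑ j, x j) := by
  simp [shiftedLaplacian_mulVec_apply, map_transMat_mulVec_b, weight]

theorem shiftedLaplacian_mulVec_c (x : Fin (m + 2) → ℂ) :
    (shiftedLaplacian (weight m α r) (transMat m s) η *ᵥ x) (c m) =
      r * (s * x (c m) - s / m * ∑ k, x (a k) + η * ∑ j, x j) := by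
  rw [shiftedLaplacian_mulVec_apply, map_transMat_mulVec_c]
  simp only [weight, if_pos]
  ring

variable (m) in
def lift (y : Fin 3 → ℂ) : Fin (m + 2) → ℂ := fun i =>
  if i = c m then y 2 else if i = b m then y 1 else y 0

@[simp] theorem lift_a (y : Fin 3 → ℂ) (k : Fin m) : lift m y (a k) = y 0 := by simp [lift]

@[simp] theorem lift_b (y : Fin 3 → ℂ) : lift m y (b m) = y 1 := by simp [lift]

@[simp] theorem lift_c (y : Fin 3 → ℂ) : lift m y (c m) = y 2 := by simp [lift]

@[simp] theorem lift_zero : lift m 0 = 0 := by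
  ext
  simp [lift]

theorem lift_smul (lam : ℂ) (y : Fin 3 → ℂ) : lift m (lam • y) = lam • lift m y := by
  ext
  simp only [lift, Pi.smul_apply, smul_eq_mul]
  split_ifs <;> rfl

theorem lift_injective (hm : m ≠ 0) : Function.Injective (lift m) := by
  intro y y' h
  let k : Fin m := ⟨0, Nat.pos_of_ne_zero hm⟩
  ext i
  fin_cases i
  · simpa using congrFun h (a k)
  · simpa using congrFun h (b m)
  · simpa using congrFun h (c m)

variable (m) in
noncomputable def lumped (α r η : ℝ) : Matrix (Fin 3) (Fin 3) ℝ :=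
  !![α * (1 + η * m), α * (η - 1), α * η;
     α * η * m, α * (1 + η), α * (η - 1);
     r * η * m - α, r * η, α + r * η]

theorem sum_lift (y : Fin 3 → ℂ) : ∑ j, lift m y j = m * y 0 + y 1 + y 2 := by
  simp [sum_univ]

theorem shiftedLaplacian_mulVec_lift (hm : m ≠ 0) (hrs : r * s = α) (y : Fin 3 → ℂ) :
    shiftedLaplacian (weight m α r) (transMat m s) η *ᵥ lift m y =
      lift m ((lumped m α r η).map Complex.ofReal *ᵥ y) := by
  have hrsC : (r : ℂ) * s = α := by exact_mod_cast hrs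
  have hmC : (m : ℂ) ≠ 0 := by exact_mod_cast hm
  ext i
  rcases eq_a_or_eq_b_or_eq_c i with ⟨k, rfl⟩ | rfl | rfl
  · rw [shiftedLaplacian_mulVec_a, sum_lift]
    simp [lumped, mulVec, dotProduct, Fin.sum_univ_three]
    ring
  · rw [shiftedLaplacian_mulVec_b, sum_lift]
    simp [lumped, mulVec, dotProduct, Fin.sum_univ_three]
    ring
  · rw [shiftedLaplacian_mulVec_c, sum_lift]
    simp [lumped, mulVec, dotProduct, Fin.sum_univ_three]
    field_simp
    linear_combination (y 2 - y 0) * hrsC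

theorem eq_lift_of_mulVec_eq_smul (k₀ : Fin m) {lam : ℂ} {x : Fin (m + 2) → ℂ}
    (hx : shiftedLaplacian (weight m α r) (transMat m s) η *ᵥ x = lam • x)
    (hlam : lam ≠ α) : x = lift m ![x (a k₀), x (b m), x (c m)] := by
  have ha : ∀ k, (α - lam) * x (a k) = α * (x (b m) - η * ∑ j, x j) := fun k => by
    have h := congrFun hx (a k)
    rw [shiftedLaplacian_mulVec_a, Pi.smul_apply, smul_eq_mul] at h
    linear_combination h
  have hne : (α : ℂ) - lam ≠ 0 := sub_ne_zero.mpr hlam.symm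
  ext i
  rcases eq_a_or_eq_b_or_eq_c i with ⟨k, rfl⟩ | rfl | rfl
  · simpa using mul_left_cancel₀ hne ((ha k).trans (ha k₀).symm)
  · simp
  · simp

theorem det_smul_one_sub_lumped (hsum : (m + 1) * α + r = 1) (hkey : (m + 2) * (r + 2 * α) = 24)
    (lam : ℂ) :
    (lam • 1 - (lumped m α r η).map Complex.ofReal).det =
      lam ^ 3 - (3 * α + η : ℝ) * lam ^ 2 + (3 * α ^ 2 + 3 * α * η : ℝ) * lam
        - (24 * α ^ 2 * η : ℝ) := by
  have hsumC : ((m : ℂ) + 1) * α + r = 1 := by exact_mod_cast hsum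
  have hkeyC : ((m : ℂ) + 2) * (r + 2 * α) = 24 := by exact_mod_cast hkey
  rw [det_fin_three]
  simp [lumped]
  linear_combination
    (3 * (α : ℂ) * η * lam - η * lam ^ 2) * hsumC - η * (α : ℂ) ^ 2 * hkeyC

theorem eq_or_det_eq_zero_of_mulVec_eq_smul (hm : m ≠ 0) (hrs : r * s = α) {lam : ℂ}
    {x : Fin (m + 2) → ℂ} (hx0 : x ≠ 0)
    (hx : shiftedLaplacian (weight m α r) (transMat m s) η *ᵥ x = lam • x) :
    lam = α ∨ (lam • 1 - (lumped m α r η).map Complex.ofReal).det = 0 := by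
  refine or_iff_not_imp_left.mpr fun hlam => ?_
  set y : Fin 3 → ℂ := ![x (a ⟨0, Nat.pos_of_ne_zero hm⟩), x (b m), x (c m)]
  have hxy : x = lift m y := eq_lift_of_mulVec_eq_smul _ hx hlam
  have hy : (lumped m α r η).map Complex.ofReal *ᵥ y = lam • y := by
    apply lift_injective hm
    rw [← shiftedLaplacian_mulVec_lift hm hrs, ← hxy, hx, hxy, lift_smul]
  refine exists_mulVec_eq_zero_iff.mp ⟨y, fun h => hx0 (by rw [hxy, h, lift_zero]), ?_⟩
  rw [sub_mulVec, hy, smul_mulVec, one_mulVec, sub_self]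

theorem exists_mulVec_eq_smul_of_det_eq_zero (hm : m ≠ 0) (hrs : r * s = α) {lam : ℂ}
    (h : (lam • 1 - (lumped m α r η).map Complex.ofReal).det = 0) :
    ∃ x ≠ 0, shiftedLaplacian (weight m α r) (transMat m s) η *ᵥ x = lam • x := by
  obtain ⟨y, hy0, hy⟩ := exists_mulVec_eq_zero_iff.mpr h
  rw [sub_mulVec, smul_mulVec, one_mulVec, sub_eq_zero] at hy
  refine ⟨lift m y, fun h0 => hy0 (lift_injective hm (by rw [h0, lift_zero])), ?_⟩
  rw [shiftedLaplacian_mulVec_lift hm hrs, ← hy, lift_smul]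

theorem forall_eigenvalue_re_pos_iff (hm : m ≠ 0) (hα : 0 < α) (hrs : r * s = α)
    (hsum : (m + 1) * α + r = 1) (hkey : (m + 2) * (r + 2 * α) = 24) :
    (∀ (lam : ℂ) (x : Fin (m + 2) → ℂ), x ≠ 0 →
        shiftedLaplacian (weight m α r) (transMat m s) η *ᵥ x = lam • x → 0 < lam.re) ↔
      ∀ z : ℂ, z ^ 3 + (3 * α + η : ℝ) * z ^ 2 + (3 * α ^ 2 + 3 * α * η : ℝ) * z
        + (24 * α ^ 2 * η : ℝ) = 0 → z.re < 0 := by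
  constructor
  · intro h z hz
    have hdet : ((-z) • 1 - (lumped m α r η).map Complex.ofReal).det = 0 := by
      rw [det_smul_one_sub_lumped hsum hkey]
      linear_combination -hz
    obtain ⟨x, hx0, hx⟩ := exists_mulVec_eq_smul_of_det_eq_zero hm hrs hdet
    simpa using h _ x hx0 hx
  · intro h lam x hx0 hx
    rcases eq_or_det_eq_zero_of_mulVec_eq_smul hm hrs hx0 hx with rfl | hdet
    · simpa using hα
    · rw [det_smul_one_sub_lumped hsum hkey] at hdet
      simpa using h (-lam) (by linear_combination -hdet)

end Spectrum

end RingChain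

theorem stmt18 (m : ℕ) (hm : 22 < m) :
    let α : ℝ := ((m : ℝ) - 22) / ((m : ℝ) ^ 2 + m - 2)
    ∃ (d : Fin (m + 2) → ℝ) (P : Matrix (Fin (m + 2)) (Fin (m + 2)) ℝ),
      (∀ i, 0 < d i) ∧ (∑ i, d i = 1) ∧
      (∀ i j, 0 ≤ P i j) ∧ (∀ i, ∑ j, P i j = 1) ∧
      (∀ i j, ∃ k : ℕ, 0 < (P ^ k) i j) ∧
      (∃ k : ℕ, 0 < k ∧ ∀ i j, 0 < (P ^ k) i j) ∧
      ∀ η : ℝ, 0 < η →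
        ((∀ (lam : ℂ) (x : Fin (m + 2) → ℂ), x ≠ 0 →
            ((Matrix.diagonal d *
              (1 - P + η • Matrix.of (fun _ _ => (1 : ℝ)))).map Complex.ofReal).mulVec x
              = lam • x → 0 < lam.re)
          ↔ (η ∈ Set.Ioo 0 α ∪ Set.Ioi (3 * α))) := by
  intro α
  obtain ⟨r, s, hα, hr, hs0, hs1, hrs, hsum, hkey⟩ :=
    RingChain.exists_parameters hm (α := α) rfl
  have hm0 : m ≠ 0 := by omega
  have hP := RingChain.transMat_mem_rowStochastic hm0 hs0.le hs1.le
  have hprim := RingChain.transMat_pow_four_pos hm0 hs0 hs1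
  refine ⟨RingChain.weight m α r, RingChain.transMat m s, RingChain.weight_pos hα hr,
    (RingChain.sum_weight α r).trans hsum, fun _ _ => nonneg_of_mem_rowStochastic hP,
    sum_row_of_mem_rowStochastic hP, fun i j => ⟨4, hprim i j⟩, ⟨4, by norm_num, hprim⟩,
    fun η hη => ?_⟩
  refine (RingChain.forall_eigenvalue_re_pos_iff hm0 hα hrs hsum hkey).trans ?_
  rw [forall_cubic_eq_zero_re_neg_iff (by positivity) (by positivity) (by positivity), ← sub_pos,
    show (3 * α + η) * (3 * α ^ 2 + 3 * α * η) - 24 * α ^ 2 * η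
      = 3 * α * ((α - η) * (3 * α - η)) by ring,
    mul_pos_iff_of_pos_left (by positivity), mul_pos_iff]
  simp only [Set.mem_union, Set.mem_Ioo, Set.mem_Ioi, sub_pos, sub_neg, hη, true_and]
  constructor
  · rintro (⟨h, -⟩ | ⟨-, h⟩)
    exacts [.inl h, .inr h]
  · rintro (h | h)
    exacts [.inl ⟨h, by linarith⟩, .inr ⟨by linarith, h⟩]
end
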